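/- Let Σ_x be a real symmetric positive semidefinite d×d matrix and let 𝒢 = {G ∈ O(d) : Gᵀ Σ_x G = Σ_x} be the group of orthogonal matrices leaving Σ_x invariant. If μ is a probability distribution on ℝ^d with finite second moment whose pushforward under every G ∈ 𝒢 equals μ itself, then the mean μ_w = E_{w∼μ}[w] is 0 and the covariance matrix Σ_w = E_{w∼μ}[(w − μ_w)(w − μ_w)ᵀ] is aligned with Σ_x. -/

import Mathlib

/-!
Since `-1` is orthogonal and fixes `Sx`, the distribution is symmetric and its mean vanishes, so
`Sw` is the second-moment matrix and invariance gives `G Sw Gᵀ = Sw`, i.e. `Sw` commutes with every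
orthogonal `G` fixing `Sx`. For a nonzero eigenvector `v` of `Sx` the Householder reflection in `v⊥`
is such a `G`; commuting with it forces `Sw v ∈ ℝ v`. An endomorphism for which every vector of the
eigenspace is an eigenvector acts on it as a scalar.
-/

open Matrix MeasureTheory

/-- Eigenspace of a `d × d` real matrix `A` for the (potential) eigenvalue `μ`. -/
noncomputable def eigSp {d : ℕ} (A : Matrix (Fin d) (Fin d) ℝ) (μ : ℝ) :
    Submodule ℝ (Fin d → ℝ) :=
  Module.End.eigenspace A.mulVecLin μ

/-- `A` is aligned with `B` if every eigenspace of `B` is contained in an eigenspace of `A`. -/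
def IsAligned {d : ℕ} (A B : Matrix (Fin d) (Fin d) ℝ) : Prop :=
  ∀ μ : ℝ, ∃ ν : ℝ, eigSp B μ ≤ eigSp A ν

theorem Module.End.exists_le_eigenspace_of_forall_mem_exists_eq_smul
    {K V : Type*} [Field K] [AddCommGroup V] [Module K V] {f : Module.End K V}
    {W : Submodule K V} (h : ∀ v ∈ W, ∃ c : K, f v = c • v) :
    ∃ ν : K, W ≤ Module.End.eigenspace f ν := by
  have hmaps : ∀ v ∈ W, f v ∈ W := fun v hv => by
    obtain ⟨c, hc⟩ := h v hv
    exact hc ▸ W.smul_mem c hv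
  obtain ⟨a, ha⟩ := (f.restrict hmaps).exists_eq_smul_id_of_forall_notLinearIndependent
    fun v hli => by
      obtain ⟨c, hc⟩ := h v v.2
      have hfv : f.restrict hmaps v = c • v := Subtype.ext hc
      have hcoeffs := LinearIndependent.pair_iff.mp hli c (-1) (by rw [hfv]; simp)
      exact neg_ne_zero.mpr one_ne_zero hcoeffs.2
  refine ⟨a, fun v hv => Module.End.mem_eigenspace_iff.mpr ?_⟩
  simpa using congrArg Subtype.val (LinearMap.congr_fun ha ⟨v, hv⟩)

namespace Matrix

variable {n : Type*} [Fintype n] [DecidableEq n]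

noncomputable def householder (v : n → ℝ) : Matrix n n ℝ :=
  1 - (2 / (v ⬝ᵥ v)) • vecMulVec v v

theorem householder_isSymm (v : n → ℝ) : (householder v).IsSymm := by
  simp [householder, IsSymm, transpose_sub, transpose_smul, transpose_vecMulVec]

theorem householder_mulVec (v x : n → ℝ) :
    householder v *ᵥ x = x - (2 / (v ⬝ᵥ v) * (v ⬝ᵥ x)) • v := by
  rw [householder, sub_mulVec, one_mulVec, smul_mulVec, vecMulVec_mulVec, op_smul_eq_smul,
    smul_smul]

theorem householder_mulVec_self {v : n → ℝ} (hv : v ≠ 0) : householder v *ᵥ v = -v := by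
  have hvv : v ⬝ᵥ v ≠ 0 := mt dotProduct_self_eq_zero.mp hv
  rw [householder_mulVec, div_mul_cancel₀ 2 hvv]
  module

theorem householder_mul_self {v : n → ℝ} (hv : v ≠ 0) : householder v * householder v = 1 := by
  refine mulVec_injective (funext fun x => ?_)
  rw [← mulVec_mulVec, one_mulVec, householder_mulVec v x, mulVec_sub, mulVec_smul,
    householder_mulVec_self hv, householder_mulVec v x]
  module

theorem commute_householder {S : Matrix n n ℝ} (hS : S.IsSymm) {v : n → ℝ} {c : ℝ}
    (hv : S *ᵥ v = c • v) : Commute S (householder v) := by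
  have hproj : S * vecMulVec v v = vecMulVec v v * S := by
    rw [mul_vecMulVec, vecMulVec_mul, ← mulVec_transpose, hS.eq, hv, smul_vecMulVec, vecMulVec_smul]
  simp [Commute, SemiconjBy, householder, mul_sub, sub_mul, hproj]

theorem eq_smul_of_commute_householder {T : Matrix n n ℝ} {v : n → ℝ} (hv : v ≠ 0)
    (hT : Commute T (householder v)) : ∃ c : ℝ, T *ᵥ v = c • v := by
  have h := congrArg (· *ᵥ v) hT.eq
  simp only [← mulVec_mulVec, householder_mulVec_self hv, householder_mulVec, mulVec_neg] at h
  exact ⟨v ⬝ᵥ (T *ᵥ v) / (v ⬝ᵥ v), by linear_combination (norm := module) (-1 / 2 : ℝ) • h⟩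

theorem commute_of_mul_mul_transpose_eq {R : Type*} [CommSemiring R] {M G : Matrix n n R}
    (hG : Gᵀ * G = 1) (h : G * M * Gᵀ = M) : Commute M G :=
  calc M * G = G * M * Gᵀ * G := by rw [h]
    _ = G * M := by rw [mul_assoc, hG, mul_one]

end Matrix

theorem isAligned_of_forall_commute {d : ℕ} {S T : Matrix (Fin d) (Fin d) ℝ} (hS : S.IsSymm)
    (hT : ∀ G : Matrix (Fin d) (Fin d) ℝ, Gᵀ * G = 1 → Gᵀ * S * G = S → Commute T G) :
    IsAligned T S := by
  intro μ
  refine Module.End.exists_le_eigenspace_of_forall_mem_exists_eq_smul fun v hv => ?_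
  rcases eq_or_ne v 0 with rfl | hv0
  · exact ⟨0, by simp⟩
  have hSv : S *ᵥ v = μ • v := Module.End.mem_eigenspace_iff.mp hv
  have hHH := householder_mul_self hv0
  refine eq_smul_of_commute_householder hv0 (hT _ ?_ ?_)
  · rw [(householder_isSymm v).eq, hHH]
  · rw [(householder_isSymm v).eq, mul_assoc, (commute_householder hS hSv).eq, ← mul_assoc, hHH,
      one_mul]

theorem integral_eq_zero_of_map_neg_eq {E : Type*} [MeasurableSpace E] [InvolutiveNeg E]
    [MeasurableNeg E] {μ : Measure E} (hμ : μ.map Neg.neg = μ) {f : E → ℝ}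
    (hf : ∀ x, f (-x) = -f x) : ∫ x, f x ∂μ = 0 := by
  have h := integral_map_equiv (MeasurableEquiv.neg E) f (μ := μ)
  rw [show ⇑(MeasurableEquiv.neg E) = Neg.neg from rfl, hμ] at h
  simp only [hf, integral_neg] at h
  linarith

noncomputable def secondMoment {n : Type*} (μ : Measure (n → ℝ)) : Matrix n n ℝ :=
  of fun i j => ∫ w, w i * w j ∂μ

section SecondMoment

variable {m n : Type*} [Fintype n] {μ : Measure (n → ℝ)}

theorem integral_mulVec_mul_mulVec (hμ : ∀ i j, Integrable (fun w => w i * w j) μ)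
    (A B : Matrix m n ℝ) (i j : m) :
    ∫ w, (A *ᵥ w) i * (B *ᵥ w) j ∂μ = (A * secondMoment μ * Bᵀ) i j := by
  have hexp : ∀ w : n → ℝ, (A *ᵥ w) i * (B *ᵥ w) j = ∑ k, ∑ l, A i k * B j l * (w k * w l) :=
    fun w => by
      simp only [mulVec, dotProduct, Finset.sum_mul_sum]
      exact Finset.sum_congr rfl fun k _ => Finset.sum_congr rfl fun l _ => by ring
  simp_rw [hexp]
  rw [integral_finsetSum _ fun k _ => integrable_finsetSum _ fun l _ => (hμ k l).const_mul _]
  simp_rw [integral_finsetSum _ fun l _ => (hμ _ l).const_mul _, integral_const_mul]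
  simp only [secondMoment, mul_apply, transpose_apply, of_apply, Finset.sum_mul]
  rw [Finset.sum_comm]
  exact Finset.sum_congr rfl fun k _ => Finset.sum_congr rfl fun l _ => by ring

theorem secondMoment_conj_of_map_eq (hμ : ∀ i j, Integrable (fun w => w i * w j) μ)
    {G : Matrix n n ℝ} (hG : μ.map G.mulVec = μ) : G * secondMoment μ * Gᵀ = secondMoment μ := by
  have hGm : Measurable G.mulVec := (continuous_const.matrix_mulVec continuous_id).measurable
  ext i j
  rw [← integral_mulVec_mul_mulVec hμ]
  conv_rhs => rw [secondMoment, of_apply, ← hG]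
  exact (integral_map (f := fun w => w i * w j) hGm.aemeasurable (by fun_prop)).symm

end SecondMoment

theorem mean_zero_and_cov_aligned_of_invariant {d : ℕ}
    (Sx : Matrix (Fin d) (Fin d) ℝ) (hSx : Sx.PosSemidef)
    (μ : Measure (Fin d → ℝ))
    (hmom2 : ∀ i j, Integrable (fun w => w i * w j) μ)
    (hinv : ∀ G : Matrix (Fin d) (Fin d) ℝ, Gᵀ * G = 1 → Gᵀ * Sx * G = Sx →
      Measure.map G.mulVec μ = μ)
    (μw : Fin d → ℝ) (hμw : μw = fun i => ∫ w, w i ∂μ)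
    (Sw : Matrix (Fin d) (Fin d) ℝ)
    (hSw : Sw = Matrix.of fun i j => ∫ w, (w i - μw i) * (w j - μw j) ∂μ) :
    μw = 0 ∧ IsAligned Sw Sx := by
  have hneg : μ.map Neg.neg = μ := by
    have h := hinv (-1) (by simp) (by simp)
    rwa [show (-1 : Matrix (Fin d) (Fin d) ℝ).mulVec = Neg.neg from
      funext fun w => by rw [neg_mulVec, one_mulVec]] at h
  have hμw0 : μw = 0 := by
    subst hμw
    exact funext fun i => integral_eq_zero_of_map_neg_eq hneg fun w => rfl
  have hSw0 : Sw = secondMoment μ := by simp [hSw, hμw0, secondMoment]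
  have hcomm : ∀ G : Matrix (Fin d) (Fin d) ℝ, Gᵀ * G = 1 → Gᵀ * Sx * G = Sx → Commute Sw G :=
    fun G hG hGS => hSw0 ▸
      commute_of_mul_mul_transpose_eq hG (secondMoment_conj_of_map_eq hmom2 (hinv G hG hGS))
  exact ⟨hμw0, isAligned_of_forall_commute (isHermitian_iff_isSymm.mp hSx.isHermitian) hcomm⟩
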